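/- Let (A,d,⟨·,·⟩) be a cyclic cochain complex and B ⊆ A a quasi-isomorphic cyclic subcomplex. Then there exists a Hodge decomposition A = H ⊕ im d ⊕ C which is relative to B, such that the unique symmetric projection π_B : A → A with image B and kernel B^⊥ respects the Hodge decompositions of A and of B (i.e. π_B(H) ⊆ B∩H and π_B(C) ⊆ B∩C). -/

import Mathlib

noncomputable section

/-- A cochain complex over `ℝ` (with a `ℤ`-grading realized as an internal direct sum
of submodules) together with a graded-symmetric pairing of degree `n` compatible with
the differential. -/
structure PairedComplex (A : Type*) [AddCommGroup A] [Module ℝ A] where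
  /-- the grading `A = ⊕ᵢ Aⁱ` -/
  grading : ℤ → Submodule ℝ A
  internal : DirectSum.IsInternal grading
  /-- the differential -/
  d : A →ₗ[ℝ] A
  d_degree : ∀ i : ℤ, ∀ x ∈ grading i, d x ∈ grading (i + 1)
  d_sq : ∀ x : A, d (d x) = 0
  /-- the degree of the pairing -/
  n : ℤ
  /-- the pairing -/
  pair : A →ₗ[ℝ] A →ₗ[ℝ] ℝ
  pair_degree : ∀ i j : ℤ, i + j ≠ n → ∀ x ∈ grading i, ∀ y ∈ grading j, pair x y = 0
  pair_symm : ∀ i j : ℤ, ∀ x ∈ grading i, ∀ y ∈ grading j,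
      pair x y = (-1 : ℝ) ^ (i * j) * pair y x
  pair_d : ∀ i : ℤ, ∀ x ∈ grading i, ∀ y : A,
      pair (d x) y = (-1 : ℝ) ^ (1 + i) * pair x (d y)

namespace PairedComplex

variable {A : Type*} [AddCommGroup A] [Module ℝ A] (X : PairedComplex A)

/-- `f` is homogeneous of degree `k`. -/
def IsDegree (f : A →ₗ[ℝ] A) (k : ℤ) : Prop :=
  ∀ i : ℤ, ∀ x ∈ X.grading i, f x ∈ X.grading (i + k)

/-- A chain map: a degree `0` map commuting with the differential. -/
def IsChainMap (f : A →ₗ[ℝ] A) : Prop :=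
  X.IsDegree f 0 ∧ ∀ x : A, f (X.d x) = X.d (f x)

/-- A projection: an idempotent chain map. -/
def IsProjection (p : A →ₗ[ℝ] A) : Prop :=
  X.IsChainMap p ∧ ∀ x : A, p (p x) = p x

/-- The projection `π_P = id + d∘P + P∘d` associated to a homotopy operator `P`. -/
def assocProj (P : A →ₗ[ℝ] A) : A →ₗ[ℝ] A :=
  LinearMap.id + X.d ∘ₗ P + P ∘ₗ X.d

/-- A homotopy operator: a degree `-1` map such that `−d∘P − P∘d` is a projection. -/
def IsHomotopyOperator (P : A →ₗ[ℝ] A) : Prop :=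
  X.IsDegree P (-1) ∧ X.IsProjection (-(X.d ∘ₗ P) - P ∘ₗ X.d)

/-- A homotopy operator `P` is special if `P∘P = 0` and `P∘d∘P = −P`. -/
def IsSpecial (P : A →ₗ[ℝ] A) : Prop :=
  (∀ x : A, P (P x) = 0) ∧ ∀ x : A, P (X.d (P x)) = -(P x)

/-- The symmetry property `⟨Px,y⟩ = (−1)^{deg x} ⟨x,Py⟩` of a propagator. -/
def IsSymmetricDeg (P : A →ₗ[ℝ] A) : Prop :=
  ∀ i : ℤ, ∀ x ∈ X.grading i, ∀ y : A,
    X.pair (P x) y = (-1 : ℝ) ^ i * X.pair x (P y)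

/-- A propagator: a homotopy operator satisfying the symmetry property. -/
def IsPropagator (P : A →ₗ[ℝ] A) : Prop :=
  X.IsHomotopyOperator P ∧ X.IsSymmetricDeg P

/-- A symmetric operator: `⟨px,y⟩ = ⟨x,py⟩`. -/
def IsSymmetric (p : A →ₗ[ℝ] A) : Prop :=
  ∀ x y : A, X.pair (p x) y = X.pair x (p y)

/-- Nondegeneracy of the pairing. -/
def Nondegenerate : Prop :=
  ∀ x : A, (∀ y : A, X.pair x y = 0) → x = 0

/-- The pairing is perfect: the musical map `x ↦ ⟨x,·⟩` is an isomorphism onto the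
graded dual, i.e. it is injective and every linear functional on `A^{n-i}` is
represented by an element of `A^i`. -/
def Perfect : Prop :=
  X.Nondegenerate ∧
    ∀ i : ℤ, ∀ φ : ↥(X.grading (X.n - i)) →ₗ[ℝ] ℝ,
      ∃ x ∈ X.grading i, ∀ y : ↥(X.grading (X.n - i)), X.pair x (y : A) = φ y

/-- A chain map induces an isomorphism on cohomology (elementwise formulation). -/
def IsQuasiIso (f : A →ₗ[ℝ] A) : Prop :=
  (∀ x : A, X.d x = 0 → ∃ y : A, X.d y = 0 ∧ ∃ z : A, f y - x = X.d z) ∧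
  (∀ y : A, X.d y = 0 → (∃ z : A, f y = X.d z) → ∃ w : A, y = X.d w)

/-- A graded subspace: spanned by its homogeneous elements. -/
def IsGradedSubspace (B : Submodule ℝ A) : Prop :=
  ∀ x ∈ B, x ∈ ⨆ i : ℤ, B ⊓ X.grading i

/-- A subcomplex: a graded subspace preserved by the differential. -/
def IsSubcomplex (B : Submodule ℝ A) : Prop :=
  X.IsGradedSubspace B ∧ ∀ x ∈ B, X.d x ∈ B

/-- The inclusion `B ↪ A` is a quasi-isomorphism (elementwise formulation). -/
def InclQuasiIso (B : Submodule ℝ A) : Prop :=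
  (∀ x : A, X.d x = 0 → ∃ b ∈ B, X.d b = 0 ∧ ∃ z : A, x - b = X.d z) ∧
  (∀ b ∈ B, X.d b = 0 → (∃ z : A, b = X.d z) → ∃ c ∈ B, b = X.d c)

/-- The restriction of the pairing to `B` is perfect. -/
def SubPerfect (B : Submodule ℝ A) : Prop :=
  (∀ x ∈ B, (∀ y ∈ B, X.pair x y = 0) → x = 0) ∧
    ∀ i : ℤ, ∀ φ : ↥(B ⊓ X.grading (X.n - i)) →ₗ[ℝ] ℝ,
      ∃ x ∈ B ⊓ X.grading i, ∀ y : ↥(B ⊓ X.grading (X.n - i)), X.pair x (y : A) = φ y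

/-- The orthogonal complement `B^⊥ = {x | ⟨x,b⟩ = 0 ∀ b ∈ B}`. -/
def perp (B : Submodule ℝ A) : Submodule ℝ A where
  carrier := {x : A | ∀ b ∈ B, X.pair x b = 0}
  add_mem' := by
    intro x y hx hy
    intro b hb
    have hx' := hx b hb
    have hy' := hy b hb
    simp only [map_add, LinearMap.add_apply, hx', hy', add_zero]
  zero_mem' := by
    intro b hb
    simp
  smul_mem' := by
    intro c x hx b hb
    have hx' := hx b hb
    simp only [map_smul, LinearMap.smul_apply, hx', smul_zero]

/-- A harmonic subspace: a graded subspace `H` with `ker d = H ⊕ im d`. -/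
def IsHarmonic (H : Submodule ℝ A) : Prop :=
  X.IsGradedSubspace H ∧ H ≤ LinearMap.ker X.d ∧
    H ⊓ LinearMap.range X.d = ⊥ ∧ H ⊔ LinearMap.range X.d = LinearMap.ker X.d

/-- A Hodge decomposition `B = H ⊕ d(B) ⊕ C` of a subcomplex `B ⊆ A` (with respect to
the restricted pairing); taking `B = ⊤` gives a Hodge decomposition of `A`. -/
def IsHodgeOn (B H C : Submodule ℝ A) : Prop :=
  H ≤ B ∧ C ≤ B ∧ X.IsGradedSubspace H ∧ X.IsGradedSubspace C ∧
  H ≤ LinearMap.ker X.d ∧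
  H ⊓ Submodule.map X.d B = ⊥ ∧
  H ⊔ Submodule.map X.d B = LinearMap.ker X.d ⊓ B ∧
  C ⊓ LinearMap.ker X.d = ⊥ ∧
  C ⊔ (LinearMap.ker X.d ⊓ B) = B ∧
  (∀ c ∈ C, ∀ c' ∈ C, X.pair c c' = 0) ∧
  (∀ c ∈ C, ∀ h ∈ H, X.pair c h = 0)

/-- A Hodge decomposition `A = H ⊕ im d ⊕ C` of the full complex. -/
def IsHodge (H C : Submodule ℝ A) : Prop :=
  X.IsHodgeOn ⊤ H C

/-- `A` is of Hodge type if it admits a Hodge decomposition. -/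
def IsHodgeType : Prop :=
  ∃ H C : Submodule ℝ A, X.IsHodge H C

/-- The operator `P_{H,C}` canonically associated to a Hodge decomposition `(H,C)`:
`P(dy) = −y` for `y ∈ C`, and `P = 0` on `H ⊕ C`. -/
def IsHodgeOperator (H C : Submodule ℝ A) (P : A →ₗ[ℝ] A) : Prop :=
  (∀ y ∈ C, P (X.d y) = -y) ∧ (∀ x ∈ H, P x = 0) ∧ ∀ x ∈ C, P x = 0

/-- The degenerate subspace `A_deg = {a | ⟨a,x⟩ = 0 ∀ x}`. -/
def degSub : Submodule ℝ A := X.perp ⊤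

/-- The induced pairing on cohomology is nondegenerate (elementwise formulation). -/
def CohomNondeg : Prop :=
  ∀ x : A, X.d x = 0 → (∀ y : A, X.d y = 0 → X.pair x y = 0) → ∃ z : A, x = X.d z

/-- The induced pairing on cohomology is perfect (elementwise formulation). -/
def CohomPerfect : Prop :=
  X.CohomNondeg ∧
    ∀ i : ℤ, ∀ φ : ↥(LinearMap.ker X.d ⊓ X.grading (X.n - i)) →ₗ[ℝ] ℝ,
      (∀ y : ↥(LinearMap.ker X.d ⊓ X.grading (X.n - i)),
          (∃ z : A, (y : A) = X.d z) → φ y = 0) →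
      ∃ x ∈ LinearMap.ker X.d ⊓ X.grading i,
        ∀ y : ↥(LinearMap.ker X.d ⊓ X.grading (X.n - i)), X.pair x (y : A) = φ y

end PairedComplex

namespace PairedComplex

variable {A : Type*} [AddCommGroup A] [Module ℝ A] (X : PairedComplex A)

/-- A realization of the nondegenerate quotient `Q(A) = A / A_deg`:
a surjective chain map with kernel `A_deg` preserving pairings, gradings and degree. -/
def IsQuotientMap {B : Type*} [AddCommGroup B] [Module ℝ B]
    (Y : PairedComplex B) (q : A →ₗ[ℝ] B) : Prop :=
  Function.Surjective q ∧
  LinearMap.ker q = X.degSub ∧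
  (∀ x : A, q (X.d x) = Y.d (q x)) ∧
  (∀ x y : A, Y.pair (q x) (q y) = X.pair x y) ∧
  (∀ i : ℤ, ∀ x ∈ X.grading i, q x ∈ Y.grading i) ∧
  Y.n = X.n

/-- A Hodge star on a nonnegatively graded cochain complex with pairing of degree `n`:
a degree-reversing involution (up to sign) such that `(x,y) := ⟨x,⋆y⟩` is a positive
definite inner product. -/
def IsHodgeStar (star : A →ₗ[ℝ] A) : Prop :=
  (∀ i : ℤ, ∀ x ∈ X.grading i, star x ∈ X.grading (X.n - i)) ∧
  (∀ i : ℤ, ∀ x ∈ X.grading i, star (star x) = ((-1 : ℝ) ^ (i * (X.n - i))) • x) ∧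
  (∀ x y : A, X.pair x (star y) = X.pair y (star x)) ∧
  (∀ x : A, x ≠ 0 → 0 < X.pair x (star x))

end PairedComplex

/-- A differential graded algebra with pairing: a `PairedComplex` together with an
associative product of degree `0` satisfying the Leibniz rule and compatible with the
pairing. -/
structure PairedDGA (A : Type*) [AddCommGroup A] [Module ℝ A] extends
    PairedComplex A where
  /-- the product -/
  mul : A →ₗ[ℝ] A →ₗ[ℝ] A
  mul_degree : ∀ i j : ℤ, ∀ x ∈ grading i, ∀ y ∈ grading j, mul x y ∈ grading (i + j)
  mul_assoc' : ∀ x y z : A, mul (mul x y) z = mul x (mul y z)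
  leibniz : ∀ i : ℤ, ∀ x ∈ grading i, ∀ y : A,
      d (mul x y) = mul (d x) y + ((-1 : ℝ) ^ i) • mul x (d y)
  pair_mul : ∀ x y z : A, pair (mul x y) z = pair x (mul y z)

namespace PairedDGA

variable {A : Type*} [AddCommGroup A] [Module ℝ A] (Y : PairedDGA A)

/-- `one` is a unit for the product. -/
def IsUnit (one : A) : Prop :=
  one ≠ 0 ∧ one ∈ Y.grading 0 ∧ ∀ x : A, Y.mul one x = x ∧ Y.mul x one = x

/-- graded commutativity. -/
def IsCommutative : Prop :=
  ∀ i j : ℤ, ∀ x ∈ Y.grading i, ∀ y ∈ Y.grading j,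
    Y.mul x y = ((-1 : ℝ) ^ (i * j)) • Y.mul y x

/-- An orientation of degree `n` inducing the pairing: a chain-level functional
supported in degree `n`, vanishing on boundaries, nontrivial on cohomology,
with `⟨x,y⟩ = o(x∧y)`. -/
def IsOrientation (o : A →ₗ[ℝ] ℝ) : Prop :=
  (∀ i : ℤ, i ≠ Y.n → ∀ x ∈ Y.grading i, o x = 0) ∧
  (∀ x : A, o (Y.d x) = 0) ∧
  (∃ x : A, Y.d x = 0 ∧ o x ≠ 0) ∧
  (∀ x y : A, Y.pair x y = o (Y.mul x y))

/-- The small subalgebra `S_P`: the smallest graded dg-subalgebra containing the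
harmonic subspace `H_P = im π_P` and preserved by `P`. -/
def smallSub (P : A →ₗ[ℝ] A) : Submodule ℝ A :=
  sInf {S : Submodule ℝ A |
    LinearMap.range (Y.toPairedComplex.assocProj P) ≤ S ∧
    Y.toPairedComplex.IsGradedSubspace S ∧
    (∀ x ∈ S, Y.d x ∈ S) ∧
    (∀ x ∈ S, ∀ y ∈ S, Y.mul x y ∈ S) ∧
    (∀ x ∈ S, P x ∈ S)}

end PairedDGA

/-- Elements of `A` obtained from homogeneous elements of the harmonic subspace
`H_P = im π_P` by iterated applications of `P` and of the product. -/
inductive TreeGen {A : Type*} [AddCommGroup A] [Module ℝ A]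
    (Y : PairedDGA A) (P : A →ₗ[ℝ] A) : A → Prop
  | base : ∀ (i : ℤ) (x : A), x ∈ Y.grading i →
      x ∈ LinearMap.range (Y.toPairedComplex.assocProj P) → TreeGen Y P x
  | mul : ∀ x y : A, TreeGen Y P x → TreeGen Y P y → TreeGen Y P (Y.mul x y)
  | app : ∀ x : A, TreeGen Y P x → TreeGen Y P (P x)

/-!
Since the pairing on `B` is perfect, `A = B ⊕ B^⊥` orthogonally, and `B^⊥` is again a cyclic
subcomplex. Every cyclic subcomplex `S` has a Hodge decomposition: take a graded complement `C₀`
of the cycles of `S`. The annihilator of the cycles of `S` is `d S`, so `d S` pairs perfectly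
with `C₀`, which gives a degree-preserving `Γ : A → d S` with `⟨Γ z, c⟩ = ⟨z, c⟩` on `C₀`.
Then `C = (id - ½ Γ) C₀` is an isotropic complement of the cycles, and `H` is the space of cycles
orthogonal to `C`. The Hodge decompositions of `B` and `B^⊥` add up to one of `A` relative to `B`,
and `π_B`, which is the identity on `B` and zero on `B^⊥`, maps `H` into `B ∩ H` and `C` into
`B ∩ C`.
-/

theorem LinearMap.exists_comp_comp_eq_self {K U W : Type*} [Field K] [AddCommGroup U]
    [Module K U] [AddCommGroup W] [Module K W] (f : U →ₗ[K] W) :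
    ∃ g : W →ₗ[K] U, f ∘ₗ g ∘ₗ f = f := by
  obtain ⟨r, hr⟩ := f.rangeRestrict.exists_rightInverse_of_surjective f.range_rangeRestrict
  obtain ⟨l, hl⟩ := (LinearMap.range f).subtype.exists_leftInverse_of_injective
    (Submodule.ker_subtype _)
  refine ⟨r ∘ₗ l, LinearMap.ext fun u => ?_⟩
  have hlu : l (f u) = f.rangeRestrict u := by
    simpa using LinearMap.congr_fun hl (f.rangeRestrict u)
  have hru := congrArg Subtype.val (LinearMap.congr_fun hr (f.rangeRestrict u))
  simpa [hlu] using hru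

theorem Submodule.exists_extend_of_disjoint {K V W : Type*} [Field K] [AddCommGroup V]
    [Module K V] [AddCommGroup W] [Module K W] {p q : Submodule K V} (h : Disjoint p q)
    (f : p →ₗ[K] W) : ∃ L : V →ₗ[K] W, (∀ x : p, L x = f x) ∧ ∀ x ∈ q, L x = 0 := by
  obtain ⟨q', hqq', hc⟩ := h.symm.exists_isCompl
  refine ⟨f ∘ₗ p.projectionOnto q' hc.symm, fun x => ?_, fun x hx => ?_⟩
  · simp
  · simp [Submodule.projectionOnto_apply_of_mem_right hc.symm (hqq' hx)]

theorem Submodule.disjoint_sup_sup {R M : Type*} [Ring R] [AddCommGroup M] [Module R M]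
    {S T P₁ Q₁ P₂ Q₂ : Submodule R M} (hST : Disjoint S T) (hP₁ : P₁ ≤ S) (hQ₁ : Q₁ ≤ S)
    (hP₂ : P₂ ≤ T) (hQ₂ : Q₂ ≤ T) (h₁ : Disjoint P₁ Q₁) (h₂ : Disjoint P₂ Q₂) :
    Disjoint (P₁ ⊔ P₂) (Q₁ ⊔ Q₂) := by
  refine Submodule.disjoint_def.2 fun x hP hQ => ?_
  obtain ⟨p₁, hp₁, p₂, hp₂, rfl⟩ := Submodule.mem_sup.1 hP
  obtain ⟨q₁, hq₁, q₂, hq₂, hq⟩ := Submodule.mem_sup.1 hQ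
  have h : p₁ - q₁ = q₂ - p₂ := by rw [sub_eq_sub_iff_add_eq_add, ← hq, add_comm q₂]
  have h0 := Submodule.disjoint_def.1 hST _ (sub_mem (hP₁ hp₁) (hQ₁ hq₁))
    (h ▸ sub_mem (hQ₂ hq₂) (hP₂ hp₂))
  rw [h0, eq_comm, sub_eq_zero] at h
  rw [sub_eq_zero] at h0
  rw [Submodule.disjoint_def.1 h₁ _ hp₁ (h0 ▸ hq₁), Submodule.disjoint_def.1 h₂ _ hp₂ (h ▸ hq₂),
    add_zero]

theorem LinearMap.ker_inf_sup_of_disjoint {R M : Type*} [Ring R] [AddCommGroup M] [Module R M]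
    (f : M →ₗ[R] M) {S T : Submodule R M} (hS : ∀ x ∈ S, f x ∈ S) (hT : ∀ x ∈ T, f x ∈ T)
    (hST : Disjoint S T) :
    LinearMap.ker f ⊓ (S ⊔ T) = LinearMap.ker f ⊓ S ⊔ LinearMap.ker f ⊓ T := by
  refine le_antisymm (fun x hx => ?_)
    (sup_le (inf_le_inf_left _ le_sup_left) (inf_le_inf_left _ le_sup_right))
  obtain ⟨s, hs, t, ht, rfl⟩ := Submodule.mem_sup.1 hx.2
  have hfs : f s = -f t := eq_neg_of_add_eq_zero_left (by rw [← map_add]; exact hx.1)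
  have hfs0 : f s = 0 := Submodule.disjoint_def.1 hST _ (hS s hs) (hfs ▸ neg_mem (hT t ht))
  have hft0 : f t = 0 := by rwa [hfs0, zero_eq_neg] at hfs
  exact Submodule.add_mem_sup ⟨hfs0, hs⟩ ⟨hft0, ht⟩

theorem LinearMap.apply_mem_of_mem_sup {R M : Type*} [Ring R] [AddCommGroup M] [Module R M]
    {π : M →ₗ[R] M} (hπ : ∀ x, π (π x) = π x) {P Q : Submodule R M} (hP : P ≤ LinearMap.range π)
    (hQ : Q ≤ LinearMap.ker π) {x : M} (hx : x ∈ P ⊔ Q) : π x ∈ P := by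
  obtain ⟨p, hp, q, hq, rfl⟩ := Submodule.mem_sup.1 hx
  obtain ⟨a, ha⟩ := hP hp
  rw [map_add, hQ hq, add_zero, ← ha, hπ, ha]
  exact hp

theorem Disjoint.inf_sup_of_le {α : Type*} [Lattice α] [IsModularLattice α] [OrderBot α]
    {a b c d : α} (h : Disjoint a b) (hc : c ≤ a) (hd : d ≤ b) : a ⊓ (c ⊔ d) = c := by
  rw [inf_comm, sup_inf_assoc_of_le _ hc, (h.symm.mono_left hd).eq_bot, sup_bot_eq]

namespace PairedComplex

variable {A : Type*} [AddCommGroup A] [Module ℝ A] (X : PairedComplex A)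

instance : DirectSum.Decomposition X.grading := X.internal.chooseDecomposition

def proj (i : ℤ) : A →ₗ[ℝ] A :=
  (X.grading i).subtype ∘ₗ DFinsupp.lapply i ∘ₗ
    (DirectSum.decomposeLinearEquiv X.grading).toLinearMap

theorem proj_mem (i : ℤ) (x : A) : X.proj i x ∈ X.grading i := (DirectSum.decompose X.grading x i).2

theorem proj_of_mem {i : ℤ} {x : A} (hx : x ∈ X.grading i) : X.proj i x = x :=
  DirectSum.decompose_of_mem_same X.grading hx

theorem proj_of_mem_of_ne {i j : ℤ} {x : A} (hx : x ∈ X.grading i) (hij : i ≠ j) :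
    X.proj j x = 0 :=
  DirectSum.decompose_of_mem_ne X.grading hx hij

theorem proj_d (i : ℤ) (x : A) : X.proj (i + 1) (X.d x) = X.d (X.proj i x) := by
  induction x using DirectSum.Decomposition.inductionOn X.grading with
  | zero => simp
  | add x y hx hy => simp only [map_add, hx, hy]
  | @homogeneous j x =>
    have hdx := X.d_degree j x x.2
    rcases eq_or_ne j i with rfl | hji
    · rw [X.proj_of_mem hdx, X.proj_of_mem x.2]
    · rw [X.proj_of_mem_of_ne hdx (by omega), X.proj_of_mem_of_ne x.2 hji, map_zero]

theorem pair_proj (i : ℤ) (x y : A) :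
    X.pair (X.proj i x) y = X.pair x (X.proj (X.n - i) y) := by
  induction x using DirectSum.Decomposition.inductionOn X.grading with
  | zero => simp
  | add x x' hx hx' => simp only [map_add, LinearMap.add_apply, hx, hx']
  | @homogeneous j x =>
  induction y using DirectSum.Decomposition.inductionOn X.grading with
  | zero => simp
  | add y y' hy hy' => simp only [map_add, hy, hy']
  | @homogeneous k y =>
    rcases eq_or_ne j i with rfl | hji
    · rcases eq_or_ne k (X.n - j) with rfl | hk
      · rw [X.proj_of_mem x.2, X.proj_of_mem y.2]
      · rw [X.proj_of_mem x.2, X.proj_of_mem_of_ne y.2 hk, map_zero,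
          X.pair_degree j k (by omega) _ x.2 _ y.2]
    · rw [X.proj_of_mem_of_ne x.2 hji, map_zero, LinearMap.zero_apply]
      rcases eq_or_ne k (X.n - i) with rfl | hk
      · rw [X.proj_of_mem y.2, X.pair_degree j _ (by omega) _ x.2 _ y.2]
      · rw [X.proj_of_mem_of_ne y.2 hk, map_zero]

theorem pair_eq_pair_proj_of_mem {i : ℤ} {x : A} (hx : x ∈ X.grading i) (y : A) :
    X.pair x y = X.pair x (X.proj (X.n - i) y) := by
  rw [← X.pair_proj, X.proj_of_mem hx]

theorem mem_of_forall_proj_mem {M : Submodule ℝ A} {x : A} (h : ∀ i, X.proj i x ∈ M) : x ∈ M := by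
  classical
  rw [← DirectSum.sum_support_decompose X.grading x]
  exact Submodule.sum_mem _ fun i _ => h i

variable {X}

theorem isGradedSubspace_iff {S : Submodule ℝ A} :
    X.IsGradedSubspace S ↔ ∀ i, ∀ x ∈ S, X.proj i x ∈ S := by
  refine ⟨fun hS i x hx => ?_, fun h x hx => ?_⟩
  · refine Submodule.iSup_induction (motive := fun y => X.proj i y ∈ S) _ (hS x hx) ?_ ?_ ?_
    · rintro j y ⟨hyS, hy⟩
      rcases eq_or_ne j i with rfl | hji
      · rwa [X.proj_of_mem hy]
      · rw [X.proj_of_mem_of_ne hy hji]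
        exact S.zero_mem
    · rw [map_zero]
      exact S.zero_mem
    · intro y z hy hz
      rw [map_add]
      exact S.add_mem hy hz
  · exact X.mem_of_forall_proj_mem fun i => Submodule.mem_iSup_of_mem i ⟨h i x hx, X.proj_mem i x⟩

namespace IsGradedSubspace

variable {S T : Submodule ℝ A}

theorem proj_mem (hS : X.IsGradedSubspace S) {x : A} (hx : x ∈ S) (i : ℤ) : X.proj i x ∈ S :=
  isGradedSubspace_iff.1 hS i x hx

theorem induction_on (hS : X.IsGradedSubspace S) {motive : A → Prop} {x : A} (hx : x ∈ S)
    (zero : motive 0) (add : ∀ y z, motive y → motive z → motive (y + z))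
    (homogeneous : ∀ i, ∀ y ∈ S, y ∈ X.grading i → motive y) : motive x :=
  Submodule.iSup_induction (motive := motive) _ (hS x hx)
    (fun i y hy => homogeneous i y hy.1 hy.2) zero add

theorem inf (hS : X.IsGradedSubspace S) (hT : X.IsGradedSubspace T) :
    X.IsGradedSubspace (S ⊓ T) :=
  isGradedSubspace_iff.2 fun i _ hx => ⟨hS.proj_mem hx.1 i, hT.proj_mem hx.2 i⟩

theorem sup (hS : X.IsGradedSubspace S) (hT : X.IsGradedSubspace T) :
    X.IsGradedSubspace (S ⊔ T) := by
  refine isGradedSubspace_iff.2 fun i x hx => ?_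
  obtain ⟨s, hs, t, ht, rfl⟩ := Submodule.mem_sup.1 hx
  rw [map_add]
  exact Submodule.add_mem_sup (hS.proj_mem hs i) (hT.proj_mem ht i)

theorem map (hS : X.IsGradedSubspace S) {f : A →ₗ[ℝ] A}
    (hf : ∀ i, ∀ x ∈ X.grading i, f x ∈ X.grading i) : X.IsGradedSubspace (S.map f) := by
  rintro _ ⟨s, hs, rfl⟩
  refine hS.induction_on (motive := fun s => f s ∈ ⨆ i, S.map f ⊓ X.grading i) hs (by simp)
    (fun s s' h h' => by rw [map_add]; exact add_mem h h') fun i s hs hsi => ?_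
  exact Submodule.mem_iSup_of_mem i ⟨Submodule.mem_map_of_mem hs, hf i s hsi⟩

theorem perp (hS : X.IsGradedSubspace S) : X.IsGradedSubspace (X.perp S) :=
  isGradedSubspace_iff.2 fun i x hx b hb => by
    rw [X.pair_proj]
    exact hx _ (hS.proj_mem hb _)

end IsGradedSubspace

theorem isGradedSubspace_ker : X.IsGradedSubspace (LinearMap.ker X.d) :=
  isGradedSubspace_iff.2 fun i x hx => by
    rw [LinearMap.mem_ker, ← X.proj_d, LinearMap.mem_ker.1 hx, map_zero]

theorem isGradedSubspace_iSup {M : ℤ → Submodule ℝ A} (hM : ∀ i, M i ≤ X.grading i) :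
    X.IsGradedSubspace (⨆ i, M i) := fun _ hx =>
  iSup_mono (fun i => le_inf (le_iSup M i) (hM i)) hx

theorem proj_mem_of_mem_iSup {M : ℤ → Submodule ℝ A} (hM : ∀ i, M i ≤ X.grading i) {x : A}
    (hx : x ∈ ⨆ i, M i) (j : ℤ) : X.proj j x ∈ M j := by
  refine Submodule.iSup_induction (motive := fun y => X.proj j y ∈ M j) _ hx ?_ ?_ ?_
  · intro i y hy
    rcases eq_or_ne i j with rfl | hij
    · rwa [X.proj_of_mem (hM i hy)]
    · rw [X.proj_of_mem_of_ne (hM i hy) hij]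
      exact (M j).zero_mem
  · rw [map_zero]
    exact (M j).zero_mem
  · intro y z hy hz
    rw [map_add]
    exact (M j).add_mem hy hz

theorem bilin_eq_of_eq_on_homogeneous {S T : Submodule ℝ A} (hS : X.IsGradedSubspace S)
    (hT : X.IsGradedSubspace T) {f g : A →ₗ[ℝ] A →ₗ[ℝ] ℝ}
    (h : ∀ i j, ∀ x ∈ S, x ∈ X.grading i → ∀ y ∈ T, y ∈ X.grading j → f x y = g x y)
    {x y : A} (hx : x ∈ S) (hy : y ∈ T) : f x y = g x y := by
  refine hS.induction_on (motive := fun x => f x y = g x y) hx (by simp)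
    (fun x x' hx hx' => by simp only [map_add, LinearMap.add_apply, hx, hx']) fun i x hxS hxi => ?_
  refine hT.induction_on (motive := fun y => f x y = g x y) hy (by simp)
    (fun y y' hy hy' => by simp only [map_add, hy, hy']) fun j y hyT hyj => ?_
  exact h i j x hxS hxi y hyT hyj

theorem pair_comm_eq_zero {S T : Submodule ℝ A} (hS : X.IsGradedSubspace S)
    (hT : X.IsGradedSubspace T) (h : ∀ x ∈ S, ∀ y ∈ T, X.pair x y = 0) {x y : A}
    (hy : y ∈ T) (hx : x ∈ S) : X.pair y x = 0 :=
  bilin_eq_of_eq_on_homogeneous (f := X.pair) (g := 0) hT hS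
    (fun i j y hyT hyi x hxS hxj => by
      rw [X.pair_symm i j y hyi x hxj, h x hxS y hyT, mul_zero]; rfl) hy hx

theorem IsGradedSubspace.pair_map_right_eq {C : Submodule ℝ A} (hC : X.IsGradedSubspace C)
    {Γ : A →ₗ[ℝ] A} (hΓC : ∀ z, ∀ c ∈ C, X.pair (Γ z) c = X.pair z c)
    (hΓdeg : ∀ i, ∀ z ∈ X.grading i, Γ z ∈ X.grading i) {c c' : A} (hc : c ∈ C)
    (hc' : c' ∈ C) : X.pair c (Γ c') = X.pair c c' :=
  bilin_eq_of_eq_on_homogeneous (f := X.pair.compl₂ Γ) (g := X.pair) hC hC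
    (fun i j c hc hci c' hc' hc'j => by
      rw [LinearMap.compl₂_apply, X.pair_symm i j c hci _ (hΓdeg j c' hc'j), hΓC c' c hc,
        ← X.pair_symm i j c hci c' hc'j]) hc hc'

variable (X)

theorem pair_d_eq_zero_of_d_eq_zero {y : A} (hy : X.d y = 0) (x : A) : X.pair (X.d x) y = 0 := by
  induction x using DirectSum.Decomposition.inductionOn X.grading with
  | zero => simp
  | add x x' hx hx' => simp only [map_add, LinearMap.add_apply, hx, hx', add_zero]
  | @homogeneous i x => rw [X.pair_d i x x.2, hy, map_zero, mul_zero]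

variable {X} {S : Submodule ℝ A}

theorem IsSubcomplex.perp (hS : X.IsSubcomplex S) : X.IsSubcomplex (X.perp S) := by
  refine ⟨hS.1.perp, fun x hx => ?_⟩
  refine hS.1.perp.induction_on (motive := fun x => X.d x ∈ X.perp S) hx ?_ ?_ ?_
  · rw [map_zero]
    exact zero_mem _
  · intro y z hy hz
    rw [map_add]
    exact add_mem hy hz
  · intro i y hy hyi b hb
    rw [X.pair_d i y hyi, hy _ (hS.2 b hb), mul_zero]

theorem SubPerfect.disjoint_perp (hSperf : X.SubPerfect S) : Disjoint S (X.perp S) :=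
  disjoint_iff.2 <| eq_bot_iff.2 fun x hx => hSperf.1 x hx.1 hx.2

theorem SubPerfect.exists_pair_eq (hSperf : X.SubPerfect S) (hS : X.IsGradedSubspace S) (i : ℤ)
    (L : A →ₗ[ℝ] ℝ) : ∃ x ∈ S ⊓ X.grading i, ∀ y ∈ S, X.pair x y = L (X.proj (X.n - i) y) := by
  obtain ⟨x, hx, hrep⟩ := hSperf.2 i (L ∘ₗ (S ⊓ X.grading (X.n - i)).subtype)
  refine ⟨x, hx, fun y hy => ?_⟩
  rw [X.pair_eq_pair_proj_of_mem hx.2]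
  exact hrep ⟨_, hS.proj_mem hy _, X.proj_mem _ y⟩

theorem SubPerfect.sup_perp_eq_top (hSperf : X.SubPerfect S) (hS : X.IsGradedSubspace S) :
    S ⊔ X.perp S = ⊤ := by
  refine Submodule.eq_top_iff'.2 fun a => ?_
  induction a using DirectSum.Decomposition.inductionOn X.grading with
  | zero => exact zero_mem _
  | add a a' ha ha' => exact add_mem ha ha'
  | @homogeneous i a =>
    obtain ⟨b, hb, hrep⟩ := hSperf.exists_pair_eq hS i (X.pair a)
    have hab : (a : A) - b ∈ X.perp S := fun y hy => by
      rw [map_sub, LinearMap.sub_apply, hrep y hy, ← X.pair_eq_pair_proj_of_mem a.2, sub_self]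
    simpa using Submodule.add_mem_sup hb.1 hab

theorem SubPerfect.perp (hperf : X.Perfect) (hSperf : X.SubPerfect S)
    (hS : X.IsGradedSubspace S) : X.SubPerfect (X.perp S) := by
  refine ⟨fun x hx hxx => hperf.1 x fun y => ?_, fun i φ => ?_⟩
  · obtain ⟨s, hs, v, hv, rfl⟩ :=
      Submodule.mem_sup.1 (hSperf.sup_perp_eq_top hS ▸ Submodule.mem_top : y ∈ S ⊔ X.perp S)
    rw [map_add, hx s hs, hxx v hv, add_zero]
  · obtain ⟨L, hLφ, hLS⟩ :=
      Submodule.exists_extend_of_disjoint (hSperf.disjoint_perp.symm.mono_left inf_le_left) φ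
    obtain ⟨x, hx, hrep⟩ := hperf.2 i (L ∘ₗ (X.grading (X.n - i)).subtype)
    have hxS : x ∈ X.perp S := fun b hb => by
      rw [X.pair_eq_pair_proj_of_mem hx]
      exact (hrep ⟨_, X.proj_mem _ b⟩).trans (hLS _ (hS.proj_mem hb _))
    exact ⟨x, ⟨hxS, hx⟩, fun y => (hrep ⟨y, y.2.2⟩).trans (hLφ y)⟩

/-- A primitive `w` of a homogeneous `x` represents the functional `d v ↦ ±⟨x, v⟩` on boundaries,
which is well defined because `x` annihilates the cycles; a generalized inverse `g` of `d` on `S`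
extends it to a functional on `A`. -/
theorem IsSubcomplex.mem_map_d_of_pair_cycles_eq_zero (hS : X.IsSubcomplex S)
    (hSperf : X.SubPerfect S) {x : A} (hx : x ∈ S)
    (h : ∀ k ∈ LinearMap.ker X.d ⊓ S, X.pair x k = 0) : x ∈ S.map X.d := by
  obtain ⟨g, hg⟩ := (X.d ∘ₗ S.subtype).exists_comp_comp_eq_self
  have hgd : ∀ v ∈ S, X.d (g (X.d v)) = X.d v := fun v hv =>
    LinearMap.congr_fun hg ⟨v, hv⟩
  refine X.mem_of_forall_proj_mem fun i => ?_
  set y := X.proj i x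
  have hyS : y ∈ S := hS.1.proj_mem hx i
  have hyi : y ∈ X.grading i := X.proj_mem i x
  have hyK : ∀ k ∈ LinearMap.ker X.d ⊓ S, X.pair y k = 0 := fun k hk => by
    rw [X.pair_proj]
    exact h _ ((isGradedSubspace_ker.inf hS.1).proj_mem hk _)
  obtain ⟨w, hw, hwrep⟩ := hSperf.exists_pair_eq hS.1 (i - 1)
    ((-1 : ℝ) ^ i • (X.pair y ∘ₗ S.subtype ∘ₗ g))
  have hdwi : X.d w ∈ X.grading i := by simpa using X.d_degree _ w hw.2
  have key : ∀ v ∈ S, v ∈ X.grading (X.n - i) → X.pair (X.d w) v = X.pair y v := by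
    intro v hv hvi
    have hdv : X.d v ∈ X.grading (X.n - (i - 1)) := by
      simpa [sub_add] using X.d_degree _ v hvi
    have hgv : (g (X.d v) : A) - v ∈ LinearMap.ker X.d ⊓ S :=
      ⟨by simp [hgd v hv], sub_mem (g (X.d v)).2 hv⟩
    have hpair : X.pair y (g (X.d v)) = X.pair y v := by
      simpa [sub_eq_zero] using hyK _ hgv
    rw [X.pair_d _ w hw.2, hwrep _ (hS.2 v hv), X.proj_of_mem hdv, LinearMap.smul_apply,
      smul_eq_mul, LinearMap.comp_apply, LinearMap.comp_apply, Submodule.subtype_apply, hpair,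
      ← mul_assoc, show (1 + (i - 1)) = i by omega, ← mul_zpow]
    norm_num
  have hzero : X.d w - y = 0 := hSperf.1 _ (sub_mem (hS.2 w hw.1) hyS) fun v hv => by
    rw [X.pair_eq_pair_proj_of_mem (sub_mem hdwi hyi), map_sub, LinearMap.sub_apply,
      key _ (hS.1.proj_mem hv _) (X.proj_mem _ v), sub_self]
  exact ⟨w, hw.1, sub_eq_zero.1 hzero⟩

variable (X) in
structure IsCyclesCompl (S C : Submodule ℝ A) : Prop where
  graded : X.IsGradedSubspace C
  inf_ker_eq_bot : C ⊓ LinearMap.ker X.d = ⊥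
  sup_cycles_eq : C ⊔ (LinearMap.ker X.d ⊓ S) = S

theorem exists_isCyclesCompl (hS : X.IsSubcomplex S) : ∃ C, X.IsCyclesCompl S C := by
  choose C hdisj hsup using fun i =>
    IsModularLattice.exists_disjoint_and_sup_eq
      (inf_le_inf_right (X.grading i) (inf_le_right : LinearMap.ker X.d ⊓ S ≤ S))
  have hCS : ∀ i, C i ≤ S ⊓ X.grading i := fun i => hsup i ▸ le_sup_right
  have hCi : ∀ i, C i ≤ X.grading i := fun i => (hCS i).trans inf_le_right
  refine ⟨⨆ i, C i, isGradedSubspace_iSup hCi, eq_bot_iff.2 fun x ⟨hxC, hxk⟩ => ?_, ?_⟩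
  · refine X.mem_of_forall_proj_mem fun i => ?_
    have hxi := proj_mem_of_mem_iSup hCi hxC i
    have hdx : X.d (X.proj i x) = 0 := by rw [← X.proj_d, LinearMap.mem_ker.1 hxk, map_zero]
    exact (hdisj i).le_bot ⟨⟨⟨hdx, (hCS i hxi).1⟩, X.proj_mem i x⟩, hxi⟩
  · refine le_antisymm (sup_le (iSup_le fun i => (hCS i).trans inf_le_left) inf_le_right)
      fun s hs => ?_
    refine hS.1.induction_on (motive := fun s => s ∈ (⨆ i, C i) ⊔ (LinearMap.ker X.d ⊓ S)) hs
      (zero_mem _) (fun _ _ => add_mem) fun i s hs hsi => ?_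
    have hle : S ⊓ X.grading i ≤ (⨆ i, C i) ⊔ (LinearMap.ker X.d ⊓ S) :=
      hsup i ▸ sup_le (inf_le_left.trans le_sup_right) ((le_iSup C i).trans le_sup_left)
    exact hle ⟨hs, hsi⟩

namespace IsCyclesCompl

variable {C : Submodule ℝ A}

theorem le (hC : X.IsCyclesCompl S C) : C ≤ S :=
  hC.sup_cycles_eq ▸ le_sup_left

theorem disjoint_cycles (hC : X.IsCyclesCompl S C) : Disjoint C (LinearMap.ker X.d ⊓ S) :=
  (disjoint_iff.2 hC.inf_ker_eq_bot).mono_right inf_le_left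

theorem eq_zero_of_pair_eq_zero (hC : X.IsCyclesCompl S C) (hSperf : X.SubPerfect S) {x : A}
    (hx : x ∈ S) (hxk : ∀ k ∈ LinearMap.ker X.d ⊓ S, X.pair x k = 0)
    (hxc : ∀ c ∈ C, X.pair x c = 0) : x = 0 := by
  refine hSperf.1 x hx fun y hy => ?_
  rw [← hC.sup_cycles_eq] at hy
  obtain ⟨c, hc, k, hk, rfl⟩ := Submodule.mem_sup.1 hy
  rw [map_add, hxc c hc, hxk k hk, add_zero]

theorem eq_of_mem_map_d (hC : X.IsCyclesCompl S C) (hS : X.IsSubcomplex S)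
    (hSperf : X.SubPerfect S) {g g' : A} (hg : g ∈ S.map X.d) (hg' : g' ∈ S.map X.d)
    (h : ∀ c ∈ C, X.pair g c = X.pair g' c) : g = g' := by
  obtain ⟨w, hw, rfl⟩ := hg
  obtain ⟨w', hw', rfl⟩ := hg'
  refine sub_eq_zero.1 (hC.eq_zero_of_pair_eq_zero hSperf (sub_mem (hS.2 w hw) (hS.2 w' hw'))
    (fun k hk => ?_) fun c hc => by rw [map_sub, LinearMap.sub_apply, h c hc, sub_self])
  rw [← map_sub, X.pair_d_eq_zero_of_d_eq_zero hk.1]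

theorem exists_mem_map_d_pair_eq (hC : X.IsCyclesCompl S C) (hS : X.IsSubcomplex S)
    (hSperf : X.SubPerfect S) {i : ℤ} {z : A} (hz : z ∈ X.grading i) :
    ∃ g ∈ S.map X.d ⊓ X.grading i, ∀ c ∈ C, X.pair g c = X.pair z c := by
  obtain ⟨L, hLC, hLK⟩ := Submodule.exists_extend_of_disjoint hC.disjoint_cycles
    (X.pair z ∘ₗ C.subtype)
  obtain ⟨g, hg, hgrep⟩ := hSperf.exists_pair_eq hS.1 i L
  have hK := isGradedSubspace_ker.inf hS.1
  refine ⟨g, ⟨hS.mem_map_d_of_pair_cycles_eq_zero hSperf hg.1 fun k hk => ?_, hg.2⟩,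
    fun c hc => ?_⟩
  · rw [hgrep k hk.2, hLK _ (hK.proj_mem hk _)]
  · rw [hgrep c (hC.le hc), hLC ⟨_, hC.graded.proj_mem hc _⟩, LinearMap.comp_apply,
      Submodule.subtype_apply, ← X.pair_eq_pair_proj_of_mem hz]

/-- `Γ` is the projection of `A` onto `d S` along the annihilator of `C`. -/
theorem exists_proj_boundaries (hC : X.IsCyclesCompl S C) (hS : X.IsSubcomplex S)
    (hSperf : X.SubPerfect S) : ∃ Γ : A →ₗ[ℝ] A, (∀ z, Γ z ∈ S.map X.d) ∧
      (∀ z, ∀ c ∈ C, X.pair (Γ z) c = X.pair z c) ∧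
      ∀ i, ∀ z ∈ X.grading i, Γ z ∈ X.grading i := by
  set R : A →ₗ[ℝ] C →ₗ[ℝ] ℝ := X.pair.compl₂ C.subtype
  set ι := R ∘ₗ (S.map X.d).subtype
  have hι : Function.Injective ι := fun g g' h => Subtype.ext <|
    hC.eq_of_mem_map_d hS hSperf g.2 g'.2 fun c hc => LinearMap.congr_fun h ⟨c, hc⟩
  have hR : ∀ z, R z ∈ LinearMap.range ι := by
    intro z
    induction z using DirectSum.Decomposition.inductionOn X.grading with
    | zero => simp
    | add z z' hz hz' => simpa using add_mem hz hz'
    | @homogeneous i z =>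
      obtain ⟨g, hg, hgz⟩ := hC.exists_mem_map_d_pair_eq hS hSperf z.2
      exact ⟨⟨g, hg.1⟩, LinearMap.ext fun c => hgz c c.2⟩
  refine ⟨(S.map X.d).subtype ∘ₗ LinearMap.codRestrictOfInjective R ι hι hR,
    fun z => Submodule.coe_mem _, fun z c hc => ?_, fun i z hz => ?_⟩
  · exact LinearMap.congr_fun (LinearMap.codRestrictOfInjective_comp_apply R ι hι hR z) ⟨c, hc⟩
  · obtain ⟨g, hg, hgz⟩ := hC.exists_mem_map_d_pair_eq hS hSperf hz
    have hΓz : (LinearMap.codRestrictOfInjective R ι hι hR z : A) = g := by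
      refine hC.eq_of_mem_map_d hS hSperf (Submodule.coe_mem _) hg.1 fun c hc => ?_
      rw [hgz c hc]
      exact LinearMap.congr_fun (LinearMap.codRestrictOfInjective_comp_apply R ι hι hR z) ⟨c, hc⟩
    simpa [hΓz] using hg.2

/-- Since `⟨c, Γ c'⟩ = ⟨Γ c, c'⟩ = ⟨c, c'⟩` on `C` and boundaries pair trivially with each
other, shifting `c` by `-½ Γ c` makes `C` isotropic without changing it modulo cycles. -/
theorem exists_isotropic (hC : X.IsCyclesCompl S C) (hS : X.IsSubcomplex S)
    (hSperf : X.SubPerfect S) :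
    ∃ C', X.IsCyclesCompl S C' ∧ ∀ c ∈ C', ∀ c' ∈ C', X.pair c c' = 0 := by
  obtain ⟨Γ, hΓd, hΓC, hΓdeg⟩ := hC.exists_proj_boundaries hS hSperf
  have hΓS : ∀ z, Γ z ∈ S := fun z => by
    obtain ⟨w, hw, hwz⟩ := hΓd z
    exact hwz ▸ hS.2 w hw
  have hdΓ : ∀ z, X.d (Γ z) = 0 := fun z => by
    obtain ⟨w, -, hwz⟩ := hΓd z
    rw [← hwz, X.d_sq]
  set f : A →ₗ[ℝ] A := LinearMap.id - (1 / 2 : ℝ) • Γ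
  have hf : ∀ c, f c = c - (1 / 2 : ℝ) • Γ c := fun c => rfl
  refine ⟨C.map f, ⟨hC.graded.map fun i z hz => ?_, eq_bot_iff.2 ?_, le_antisymm ?_ ?_⟩, ?_⟩
  · rw [hf]
    exact sub_mem hz (Submodule.smul_mem _ _ (hΓdeg i z hz))
  · rintro _ ⟨⟨c, hc, rfl⟩, hk⟩
    have hdc : X.d c = 0 := by simpa [hf, hdΓ] using hk
    have hc0 : c ∈ (⊥ : Submodule ℝ A) := hC.inf_ker_eq_bot ▸ ⟨hc, hdc⟩
    simp [(Submodule.mem_bot ℝ).1 hc0]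
  · refine sup_le (Submodule.map_le_iff_le_comap.2 fun c hc => ?_) inf_le_right
    exact sub_mem (hC.le hc) (Submodule.smul_mem _ _ (hΓS c))
  · intro s hs
    rw [← hC.sup_cycles_eq] at hs
    obtain ⟨c, hc, k, hk, rfl⟩ := Submodule.mem_sup.1 hs
    have hck : c + k = f c + (k + (1 / 2 : ℝ) • Γ c) := by
      rw [hf]
      abel
    rw [hck]
    exact Submodule.add_mem_sup (Submodule.mem_map_of_mem hc)
      ⟨add_mem hk.1 (Submodule.smul_mem _ _ (hdΓ c)),
        add_mem hk.2 (Submodule.smul_mem _ _ (hΓS c))⟩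
  · rintro _ ⟨c, hc, rfl⟩ _ ⟨c', hc', rfl⟩
    have hΓΓ : X.pair (Γ c) (Γ c') = 0 := by
      obtain ⟨w, -, hw⟩ := hΓd c
      rw [← hw]
      exact X.pair_d_eq_zero_of_d_eq_zero (hdΓ c') w
    simp only [hf, map_sub, map_smul, LinearMap.sub_apply, LinearMap.smul_apply, hΓC c c' hc',
      hC.graded.pair_map_right_eq hΓC hΓdeg hc hc', hΓΓ, smul_eq_mul]
    ring

theorem isHodgeOn (hC : X.IsCyclesCompl S C) (hS : X.IsSubcomplex S) (hSperf : X.SubPerfect S)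
    (hiso : ∀ c ∈ C, ∀ c' ∈ C, X.pair c c' = 0) :
    X.IsHodgeOn S (LinearMap.ker X.d ⊓ S ⊓ X.perp C) C := by
  obtain ⟨Γ, hΓd, hΓC, -⟩ := hC.exists_proj_boundaries hS hSperf
  have hdS : S.map X.d ≤ LinearMap.ker X.d ⊓ S :=
    Submodule.map_le_iff_le_comap.2 fun w hw => ⟨X.d_sq w, hS.2 w hw⟩
  have hHg : X.IsGradedSubspace (LinearMap.ker X.d ⊓ S ⊓ X.perp C) :=
    (isGradedSubspace_ker.inf hS.1).inf hC.graded.perp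
  refine ⟨inf_le_left.trans inf_le_right, hC.le, hHg, hC.graded, inf_le_left.trans inf_le_left,
    eq_bot_iff.2 ?_, le_antisymm (sup_le inf_le_left hdS) ?_, hC.inf_ker_eq_bot,
    hC.sup_cycles_eq, hiso, fun c hc h hh =>
      pair_comm_eq_zero hHg hC.graded (fun h hh c hc => hh.2 c hc) hc hh⟩
  · rintro x ⟨hxH, w, -, rfl⟩
    exact hC.eq_zero_of_pair_eq_zero hSperf hxH.1.2
      (fun k hk => X.pair_d_eq_zero_of_d_eq_zero hk.1 w) hxH.2
  · intro b hb
    rw [← sub_add_cancel b (Γ b)]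
    refine Submodule.add_mem_sup ⟨sub_mem hb (hdS (hΓd b)), fun c hc => ?_⟩ (hΓd b)
    rw [map_sub, LinearMap.sub_apply, hΓC b c hc, sub_self]

end IsCyclesCompl

theorem IsSubcomplex.exists_isHodgeOn (hS : X.IsSubcomplex S) (hSperf : X.SubPerfect S) :
    ∃ H C, X.IsHodgeOn S H C := by
  obtain ⟨C₀, hC₀⟩ := exists_isCyclesCompl hS
  obtain ⟨C, hC, hiso⟩ := hC₀.exists_isotropic hS hSperf
  exact ⟨_, C, hC.isHodgeOn hS hSperf hiso⟩

theorem pair_sup_sup_eq_zero {S T P₁ Q₁ P₂ Q₂ : Submodule ℝ A}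
    (hST : ∀ s ∈ S, ∀ t ∈ T, X.pair s t = 0) (hTS : ∀ t ∈ T, ∀ s ∈ S, X.pair t s = 0)
    (hP₁ : P₁ ≤ S) (hQ₁ : Q₁ ≤ S) (hP₂ : P₂ ≤ T) (hQ₂ : Q₂ ≤ T)
    (h₁ : ∀ p ∈ P₁, ∀ q ∈ Q₁, X.pair p q = 0) (h₂ : ∀ p ∈ P₂, ∀ q ∈ Q₂, X.pair p q = 0) :
    ∀ p ∈ P₁ ⊔ P₂, ∀ q ∈ Q₁ ⊔ Q₂, X.pair p q = 0 := by
  intro p hp q hq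
  obtain ⟨p₁, hp₁, p₂, hp₂, rfl⟩ := Submodule.mem_sup.1 hp
  obtain ⟨q₁, hq₁, q₂, hq₂, rfl⟩ := Submodule.mem_sup.1 hq
  simp only [map_add, LinearMap.add_apply, h₁ p₁ hp₁ q₁ hq₁, h₂ p₂ hp₂ q₂ hq₂,
    hST p₁ (hP₁ hp₁) q₂ (hQ₂ hq₂), hTS p₂ (hP₂ hp₂) q₁ (hQ₁ hq₁), add_zero]

theorem IsHodgeOn.sup {T H₁ C₁ H₂ C₂ : Submodule ℝ A} (h₁ : X.IsHodgeOn S H₁ C₁)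
    (h₂ : X.IsHodgeOn T H₂ C₂) (hSd : ∀ x ∈ S, X.d x ∈ S) (hTd : ∀ x ∈ T, X.d x ∈ T)
    (hST : Disjoint S T) (hSTpair : ∀ s ∈ S, ∀ t ∈ T, X.pair s t = 0)
    (hTSpair : ∀ t ∈ T, ∀ s ∈ S, X.pair t s = 0) : X.IsHodgeOn (S ⊔ T) (H₁ ⊔ H₂) (C₁ ⊔ C₂) := by
  obtain ⟨hH₁, hC₁, hH₁g, hC₁g, hH₁k, hH₁d, hH₁sup, hC₁k, hC₁sup, hC₁iso, hC₁H₁⟩ := h₁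
  obtain ⟨hH₂, hC₂, hH₂g, hC₂g, hH₂k, hH₂d, hH₂sup, hC₂k, hC₂sup, hC₂iso, hC₂H₂⟩ := h₂
  have hker := X.d.ker_inf_sup_of_disjoint hSd hTd hST
  have hdS : S.map X.d ≤ S := Submodule.map_le_iff_le_comap.2 hSd
  have hdT : T.map X.d ≤ T := Submodule.map_le_iff_le_comap.2 hTd
  refine ⟨sup_le_sup hH₁ hH₂, sup_le_sup hC₁ hC₂, hH₁g.sup hH₂g, hC₁g.sup hC₂g,
    sup_le hH₁k hH₂k, ?_, ?_, ?_, ?_, X.pair_sup_sup_eq_zero hSTpair hTSpair hC₁ hC₁ hC₂ hC₂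
    hC₁iso hC₂iso, X.pair_sup_sup_eq_zero hSTpair hTSpair hC₁ hH₁ hC₂ hH₂ hC₁H₁ hC₂H₂⟩
  · rw [Submodule.map_sup, ← disjoint_iff]
    exact Submodule.disjoint_sup_sup hST hH₁ hdS hH₂ hdT (disjoint_iff.2 hH₁d)
      (disjoint_iff.2 hH₂d)
  · rw [Submodule.map_sup, sup_sup_sup_comm, hH₁sup, hH₂sup, hker]
  · have hdisj := Submodule.disjoint_sup_sup hST hC₁ inf_le_right hC₂ inf_le_right
      ((disjoint_iff.2 hC₁k).mono_right inf_le_left) ((disjoint_iff.2 hC₂k).mono_right inf_le_left)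
    refine eq_bot_iff.2 fun x ⟨hxC, hxk⟩ => ?_
    have hx : x ∈ LinearMap.ker X.d ⊓ (S ⊔ T) := ⟨hxk, sup_le_sup hC₁ hC₂ hxC⟩
    rw [hker] at hx
    exact (Submodule.disjoint_def.1 hdisj x hxC hx : x = 0)
  · rw [hker, sup_sup_sup_comm, hC₁sup, hC₂sup]

theorem IsHodgeOn.isHodge_sup_perp {H₁ C₁ H₂ C₂ : Submodule ℝ A} (h₁ : X.IsHodgeOn S H₁ C₁)
    (h₂ : X.IsHodgeOn (X.perp S) H₂ C₂) (hS : X.IsSubcomplex S) (hSperf : X.SubPerfect S) :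
    X.IsHodge (H₁ ⊔ H₂) (C₁ ⊔ C₂) := by
  have h := h₁.sup h₂ hS.2 hS.perp.2 hSperf.disjoint_perp
    (fun s hs v hv => pair_comm_eq_zero hS.1.perp hS.1 (fun v hv s hs => hv s hs) hs hv)
    fun v hv s hs => hv s hs
  rwa [hSperf.sup_perp_eq_top hS.1] at h

end PairedComplex

section Statements

variable {A B : Type*} [AddCommGroup A] [Module ℝ A] [AddCommGroup B] [Module ℝ B]
theorem stmt8_general (X : PairedComplex A) (hperf : X.Perfect)
    (Bsub : Submodule ℝ A) (hB : X.IsSubcomplex Bsub)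
    (hBperf : X.SubPerfect Bsub) :
    ∃ H C : Submodule ℝ A, X.IsHodge H C ∧ X.IsHodgeOn Bsub (Bsub ⊓ H) (Bsub ⊓ C) ∧
      ∀ π : A →ₗ[ℝ] A, X.IsProjection π → X.IsSymmetric π →
        LinearMap.range π = Bsub → LinearMap.ker π = X.perp Bsub →
        (∀ h ∈ H, π h ∈ Bsub ⊓ H) ∧ (∀ c ∈ C, π c ∈ Bsub ⊓ C) := by
  obtain ⟨H₁, C₁, h₁⟩ := hB.exists_isHodgeOn hBperf
  obtain ⟨H₂, C₂, h₂⟩ := hB.perp.exists_isHodgeOn (hBperf.perp hperf hB.1)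
  have hH := hBperf.disjoint_perp.inf_sup_of_le h₁.1 h₂.1
  have hC := hBperf.disjoint_perp.inf_sup_of_le h₁.2.1 h₂.2.1
  refine ⟨H₁ ⊔ H₂, C₁ ⊔ C₂, h₁.isHodge_sup_perp h₂ hB hBperf, by rwa [hH, hC],
    fun π hπ _ hrange hker => ?_⟩
  rw [hH, hC]
  exact ⟨fun h hh => LinearMap.apply_mem_of_mem_sup hπ.2 (h₁.1.trans hrange.ge)
    (h₂.1.trans hker.ge) hh, fun c hc => LinearMap.apply_mem_of_mem_sup hπ.2
    (h₁.2.1.trans hrange.ge) (h₂.2.1.trans hker.ge) hc⟩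

/-- relative Hodge decompositions exist and the symmetric projection
onto the subcomplex respects them. -/
theorem stmt8 (X : PairedComplex A) (hperf : X.Perfect)
    (Bsub : Submodule ℝ A) (hB : X.IsSubcomplex Bsub)
    (hqi : X.InclQuasiIso Bsub) (hBperf : X.SubPerfect Bsub) :
    ∃ H C : Submodule ℝ A, X.IsHodge H C ∧ X.IsHodgeOn Bsub (Bsub ⊓ H) (Bsub ⊓ C) ∧
      ∀ π : A →ₗ[ℝ] A, X.IsProjection π → X.IsSymmetric π →
        LinearMap.range π = Bsub → LinearMap.ker π = X.perp Bsub →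
        (∀ h ∈ H, π h ∈ Bsub ⊓ H) ∧ (∀ c ∈ C, π c ∈ Bsub ⊓ C) :=
  stmt8_general X hperf Bsub hB hBperf
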